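/- arXiv:1911.06038 — 2 statements merged into one kernel-verified Lean document; each statement's English description precedes it below -/
import Mathlib

section
/- For all real numbers a and b, |a⁺ − b⁺|^p ≤ |a − b|^{p−2}(a − b)(a⁺ − b⁺), where p ≥ 2 and t⁺ = max(t, 0) denotes the positive part. -/
theorem pos_part_inequality (p : ℝ) (hp : 2 ≤ p) (a b : ℝ) :
    |max a 0 - max b 0| ^ p ≤ |a - b| ^ (p - 2) * (a - b) * (max a 0 - max b 0) := by
  set u := max a 0 - max b 0 with hu
  set d := a - b with hd
  have hle : |u| ≤ |d| := abs_max_sub_max_le_abs a b 0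
  have hmul : u * u ≤ d * u := by
    rcases le_total a 0 with ha | ha <;> rcases le_total b 0 with hb | hb <;>
      simp only [hu, hd, max_eq_right ha, max_eq_left ha, max_eq_right hb,
        max_eq_left hb] <;> nlinarith [le_max_left a 0, le_max_left b 0]
  rcases eq_or_ne u 0 with h0 | h0
  · rw [h0]
    simp only [abs_zero, mul_zero]
    exact le_of_eq (Real.zero_rpow (by linarith))
  · have hupos : 0 < |u| := abs_pos.mpr h0
    have hp2 : (0:ℝ) ≤ p - 2 := by linarith
    have key : |u| ^ p = |u| ^ (p - 2) * (|u| * |u|) := by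
      rw [show |u| * |u| = |u| ^ (2:ℝ) by rw [Real.rpow_two, sq],
        ← Real.rpow_add hupos]
      ring_nf
    rw [key]
    have h1 : |u| ^ (p - 2) ≤ |d| ^ (p - 2) := Real.rpow_le_rpow (abs_nonneg u) hle hp2
    have h2 : |u| * |u| ≤ d * u := by
      rw [abs_mul_abs_self]; exact hmul
    calc |u| ^ (p - 2) * (|u| * |u|) ≤ |d| ^ (p - 2) * (d * u) := by
          apply mul_le_mul h1 h2 (by positivity) (Real.rpow_nonneg (abs_nonneg d) _)
      _ = |d| ^ (p - 2) * d * u := by ring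
end

section
/- For real sequences: if a_n ≥ 0, a ≥ 0, p ≥ 2, and (a_n^{p−1} − a^{p−1})(a_n − a) → 0, then a_n → a. -/
/-! For `q ≥ 1` and `x, y ≥ 0`, superadditivity of `t ↦ t ^ q` gives
`|x - y| ^ (q + 1) ≤ (x ^ q - y ^ q) * (x - y)`. With `q = p - 1` the hypothesis therefore squeezes
`|a n - b| ^ p` to `0`, and taking `p`-th roots gives `a n → b`. -/

open Filter Topology

namespace Real

lemma rpow_sub_add_rpow_le {q x y : ℝ} (hy : 0 ≤ y) (hyx : y ≤ x) (hq : 1 ≤ q) :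
    (x - y) ^ q + y ^ q ≤ x ^ q := by
  simpa using add_rpow_le_rpow_add (sub_nonneg.2 hyx) hy hq

lemma abs_sub_rpow_add_one_le {q x y : ℝ} (hx : 0 ≤ x) (hy : 0 ≤ y) (hq : 1 ≤ q) :
    |x - y| ^ (q + 1) ≤ (x ^ q - y ^ q) * (x - y) := by
  wlog hyx : y ≤ x generalizing x y
  · calc |x - y| ^ (q + 1) = |y - x| ^ (q + 1) := by rw [abs_sub_comm]
      _ ≤ (y ^ q - x ^ q) * (y - x) := this hy hx (le_of_not_ge hyx)
      _ = (x ^ q - y ^ q) * (x - y) := by ring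
  have hxy : 0 ≤ x - y := sub_nonneg.2 hyx
  calc |x - y| ^ (q + 1) = (x - y) ^ q * (x - y) := by
        rw [abs_of_nonneg hxy, rpow_add_one' hxy (by linarith)]
    _ ≤ (x ^ q - y ^ q) * (x - y) := by
        gcongr
        linarith [rpow_sub_add_rpow_le hy hyx hq]

lemma tendsto_of_tendsto_abs_sub_rpow {α : Type*} {l : Filter α} {f : α → ℝ} {b p : ℝ}
    (hp : 0 < p) (h : Tendsto (fun t => |f t - b| ^ p) l (𝓝 0)) : Tendsto f l (𝓝 b) := by
  have h_root := h.rpow_const_nhds_zero (inv_pos.2 hp)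
  simp only [rpow_rpow_inv (abs_nonneg _) hp.ne'] at h_root
  exact tendsto_iff_norm_sub_tendsto_zero.2 h_root

end Real

theorem seq_power_convergence (p : ℝ) (hp : 2 ≤ p) (a : ℕ → ℝ) (b : ℝ)
    (ha : ∀ n, 0 ≤ a n) (hb : 0 ≤ b)
    (h : Tendsto (fun n => (a n ^ (p - 1) - b ^ (p - 1)) * (a n - b)) atTop (nhds 0)) :
    Tendsto a atTop (nhds b) := by
  have hq : 1 ≤ p - 1 := by linarith
  refine Real.tendsto_of_tendsto_abs_sub_rpow (p := p) (by linarith) ?_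
  refine squeeze_zero (fun n => by positivity) (fun n => ?_) h
  simpa using Real.abs_sub_rpow_add_one_le (ha n) hb hq
end
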